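/- arXiv:2502.02049 — 5 statements merged into one kernel-verified Lean document; each statement's English description precedes it below -/
import Mathlib

section
/- Set h_c(r) := r²·g_c(r) = r²/2 − (μ/p)·C^p·c^{p(1−γ_p)/2}·r^{pγ_p} − r^{4*}/(4*·S^{4*/2}) for r ≥ 0, and r_* := r_{c_*}. Then g_{c_*}(r_*) = 0, and for every c with 0 < c < c_*: g_c(r_*) > 0 and h_c has exactly three zeros in [0,∞), namely 0, r₁ and r₂, with 0 < r₁ < r_* < r₂ < ∞. -/
/-!
With `a = pγ_p - 2 < 0 < b = 4* - 2`, the function `g_c(r) = 1/2 - D r^a - K r^b` has derivative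
`r^(a-1) (-a D - b K r^(b-a))`, so it increases strictly up to its only critical point `r_c` and
decreases strictly afterwards; it tends to `-∞` at both ends of `(0, ∞)`. Its maximum
`g_c(r_c) = 1/2 - 𝓔 c^(p(1-γ_p)(4*-2)/(2(4*-pγ_p)))` vanishes exactly at `c = c_*`. For `c < c_*`
the coefficient `D` is smaller, so `g_c(r_*) > g_{c_*}(r_*) = 0`, and unimodality leaves exactly
one zero of `g_c` on each side of `r_*`; these are the positive zeros of `h_c = r² g_c`.
-/

open Real Filter Set Topology

noncomputable section

-- The paper's `g_c` is `profile (pγ_p - 2) (4* - 2) ((μ/p) C^p c^(p(1-γ_p)/2)) (1/(4* S^(4*/2)))`.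
def profile (a b D K r : ℝ) : ℝ := 1 / 2 - D * r ^ a - K * r ^ b

def profileCrit (a b D K : ℝ) : ℝ := (-a * D / (b * K)) ^ (1 / (b - a))

-- With `D = (μ/p) C^p` and `K = 1/(4* S^(4*/2))` this is the paper's `𝓔`.
def profileDeficit (a b D K : ℝ) : ℝ :=
  (b - a) / (-a) * (-a * D / b) ^ (b / (b - a)) * (1 / K) ^ (a / (b - a))

end

section Profile

variable {a b A D K : ℝ}

lemma hasDerivAt_profile {r : ℝ} (hr : 0 < r) :
    HasDerivAt (profile a b D K) (r ^ (a - 1) * (-a * D - b * K * r ^ (b - a))) r := by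
  have hpow (e : ℝ) : HasDerivAt (fun x : ℝ => x ^ e) (e * r ^ (e - 1)) r :=
    hasDerivAt_rpow_const (Or.inl hr.ne')
  refine (((hasDerivAt_const r (1 / 2 : ℝ)).sub ((hpow a).const_mul D)).sub
    ((hpow b).const_mul K)).congr_deriv ?_
  rw [show b - 1 = (a - 1) + (b - a) by ring, rpow_add hr]
  ring

lemma continuousOn_profile : ContinuousOn (profile a b D K) (Ioi 0) := fun _ hr =>
  (hasDerivAt_profile hr).continuousAt.continuousWithinAt

lemma tendsto_profile_nhdsGT_zero (ha : a < 0) (hD : 0 < D) (hK : 0 ≤ K) :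
    Tendsto (profile a b D K) (𝓝[>] 0) atBot := by
  have hlim : Tendsto (fun r : ℝ => 1 / 2 - D * r ^ a) (𝓝[>] 0) atBot :=
    tendsto_atBot_add_const_left _ _
      (tendsto_neg_atTop_atBot.comp ((tendsto_rpow_neg_nhdsGT_zero ha).const_mul_atTop hD))
  refine tendsto_atBot_mono' _ ?_ hlim
  filter_upwards [self_mem_nhdsWithin] with r hr
  have : 0 ≤ K * r ^ b := mul_nonneg hK (rpow_nonneg (le_of_lt hr) _)
  rw [profile]
  linarith

lemma tendsto_profile_atTop (hb : 0 < b) (hD : 0 ≤ D) (hK : 0 < K) :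
    Tendsto (profile a b D K) atTop atBot := by
  have hlim : Tendsto (fun r : ℝ => 1 / 2 - K * r ^ b) atTop atBot :=
    tendsto_atBot_add_const_left _ _
      (tendsto_neg_atTop_atBot.comp ((tendsto_rpow_atTop hb).const_mul_atTop hK))
  refine tendsto_atBot_mono' _ ?_ hlim
  filter_upwards [eventually_ge_atTop 0] with r hr
  have : 0 ≤ D * r ^ a := mul_nonneg hD (rpow_nonneg hr _)
  rw [profile]
  linarith

lemma exists_profile_eq_zero_Ioo (ha : a < 0) (hD : 0 < D) (hK : 0 ≤ K) {s : ℝ} (hs : 0 < s)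
    (hGs : 0 < profile a b D K s) : ∃ r ∈ Ioo 0 s, profile a b D K r = 0 := by
  obtain ⟨ε, hεs, hGε⟩ := (((tendsto_profile_nhdsGT_zero ha hD hK).eventually
    (eventually_lt_atBot 0)).and (Ioo_mem_nhdsGT hs)).exists
  obtain ⟨r, hr, hGr⟩ := intermediate_value_Ioo hGε.2.le
    (continuousOn_profile.mono fun _ hx => lt_of_lt_of_le hGε.1 hx.1) ⟨hεs, hGs⟩
  exact ⟨r, ⟨hGε.1.trans hr.1, hr.2⟩, hGr⟩

lemma exists_profile_eq_zero_Ioi (hb : 0 < b) (hD : 0 ≤ D) (hK : 0 < K) {s : ℝ} (hs : 0 < s)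
    (hGs : 0 < profile a b D K s) : ∃ r ∈ Ioi s, profile a b D K r = 0 := by
  obtain ⟨R, hGR, hsR⟩ := (((tendsto_profile_atTop hb hD hK).eventually
    (eventually_lt_atBot 0)).and (eventually_gt_atTop s)).exists
  obtain ⟨r, hr, hGr⟩ := intermediate_value_Ioo' hsR.le
    (continuousOn_profile.mono fun _ hx => lt_of_lt_of_le hs hx.1) ⟨hGR, hGs⟩
  exact ⟨r, hr.1, hGr⟩

lemma profileCrit_pos (ha : a < 0) (hb : 0 < b) (hD : 0 < D) (hK : 0 < K) :
    0 < profileCrit a b D K := by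
  have : 0 < -a := neg_pos.2 ha
  rw [profileCrit]
  positivity

lemma profileCrit_rpow (ha : a < 0) (hb : 0 < b) (hD : 0 < D) (hK : 0 < K) :
    profileCrit a b D K ^ (b - a) = -a * D / (b * K) := by
  have : 0 < -a := neg_pos.2 ha
  rw [profileCrit, one_div, rpow_inv_rpow (by positivity) (by linarith)]

lemma profile_strictMonoOn (ha : a < 0) (hb : 0 < b) (hD : 0 < D) (hK : 0 < K) :
    StrictMonoOn (profile a b D K) (Ioc 0 (profileCrit a b D K)) := by
  refine strictMonoOn_of_deriv_pos (convex_Ioc _ _)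
    (continuousOn_profile.mono fun _ hr => hr.1) fun r hr => ?_
  rw [interior_Ioc] at hr
  rw [(hasDerivAt_profile hr.1).deriv]
  have hlt : r ^ (b - a) < -a * D / (b * K) := by
    rw [← profileCrit_rpow ha hb hD hK]
    exact rpow_lt_rpow hr.1.le hr.2 (by linarith)
  have := rpow_pos_of_pos hr.1 (a - 1)
  rw [lt_div_iff₀ (by positivity)] at hlt
  nlinarith

lemma profile_strictAntiOn (ha : a < 0) (hb : 0 < b) (hD : 0 < D) (hK : 0 < K) :
    StrictAntiOn (profile a b D K) (Ici (profileCrit a b D K)) := by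
  have hm := profileCrit_pos ha hb hD hK
  refine strictAntiOn_of_deriv_neg (convex_Ici _)
    (continuousOn_profile.mono fun _ hr => lt_of_lt_of_le hm hr) fun r hr => ?_
  rw [interior_Ici] at hr
  have hr0 : 0 < r := hm.trans hr
  rw [(hasDerivAt_profile hr0).deriv]
  have hlt : -a * D / (b * K) < r ^ (b - a) := by
    rw [← profileCrit_rpow ha hb hD hK]
    exact rpow_lt_rpow hm.le hr (by linarith)
  have := rpow_pos_of_pos hr0 (a - 1)
  rw [div_lt_iff₀ (by positivity)] at hlt
  nlinarith

lemma profile_le_profile_profileCrit (ha : a < 0) (hb : 0 < b) (hD : 0 < D) (hK : 0 < K)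
    {r : ℝ} (hr : 0 < r) : profile a b D K r ≤ profile a b D K (profileCrit a b D K) := by
  have hm := profileCrit_pos ha hb hD hK
  rcases le_total r (profileCrit a b D K) with hrm | hmr
  · exact (profile_strictMonoOn ha hb hD hK).monotoneOn ⟨hr, hrm⟩ ⟨hm, le_rfl⟩ hrm
  · exact (profile_strictAntiOn ha hb hD hK).antitoneOn (mem_Ici.2 le_rfl) hmr hmr

theorem exists_two_zeros_profile (ha : a < 0) (hb : 0 < b) (hD : 0 < D) (hK : 0 < K) {t : ℝ}
    (ht : 0 < t) (hGt : 0 < profile a b D K t) :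
    ∃ r₁ r₂, 0 < r₁ ∧ r₁ < t ∧ t < r₂ ∧ profile a b D K r₁ = 0 ∧ profile a b D K r₂ = 0 ∧
      ∀ r, 0 < r → profile a b D K r = 0 → r = r₁ ∨ r = r₂ := by
  set m := profileCrit a b D K
  have hm : 0 < m := profileCrit_pos ha hb hD hK
  have hGm : 0 < profile a b D K m :=
    hGt.trans_le (profile_le_profile_profileCrit ha hb hD hK ht)
  have hmono := profile_strictMonoOn ha hb hD hK
  have hanti := profile_strictAntiOn ha hb hD hK
  obtain ⟨r₁, ⟨hr₁, hr₁m⟩, hG₁⟩ := exists_profile_eq_zero_Ioo ha hD hK.le hm hGm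
  obtain ⟨r₂, hmr₂, hG₂⟩ := exists_profile_eq_zero_Ioi hb hD.le hK hm hGm
  have hr₂ : m ≤ r₂ := le_of_lt hmr₂
  refine ⟨r₁, r₂, hr₁, ?_, ?_, hG₁, hG₂, fun r hr hGr => ?_⟩
  · by_contra! htr₁
    have := hmono.monotoneOn ⟨ht, htr₁.trans hr₁m.le⟩ ⟨hr₁, hr₁m.le⟩ htr₁
    linarith
  · by_contra! hr₂t
    have := hanti.antitoneOn hr₂ (mem_Ici.2 (hr₂.trans hr₂t)) hr₂t
    linarith
  · rcases le_total r m with hrm | hmr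
    · exact Or.inl (hmono.injOn ⟨hr, hrm⟩ ⟨hr₁, hr₁m.le⟩ (hGr.trans hG₁.symm))
    · exact Or.inr (hanti.injOn hmr hr₂ (hGr.trans hG₂.symm))

theorem exists_two_zeros_sq_mul_profile (ha : a < 0) (hb : 0 < b) (hD : 0 < D) (hK : 0 < K)
    {t : ℝ} (ht : 0 < t) (hGt : 0 < profile a b D K t) :
    ∃ r₁ r₂, 0 < r₁ ∧ r₁ < t ∧ t < r₂ ∧
      r₁ ^ 2 * profile a b D K r₁ = 0 ∧ r₂ ^ 2 * profile a b D K r₂ = 0 ∧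
      ∀ r, 0 ≤ r → r ^ 2 * profile a b D K r = 0 → r = 0 ∨ r = r₁ ∨ r = r₂ := by
  obtain ⟨r₁, r₂, hr₁, hr₁t, htr₂, hG₁, hG₂, huniq⟩ := exists_two_zeros_profile ha hb hD hK ht hGt
  refine ⟨r₁, r₂, hr₁, hr₁t, htr₂, by rw [hG₁, mul_zero], by rw [hG₂, mul_zero],
    fun r hr hr0 => ?_⟩
  rcases hr.eq_or_lt with rfl | hr
  · exact Or.inl rfl
  · rw [mul_eq_zero, or_iff_right (pow_ne_zero 2 hr.ne')] at hr0
    exact Or.inr (huniq r hr hr0)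

lemma sq_mul_profile_sub_two {e f r : ℝ} (he : e ≠ 0) (hf : f ≠ 0) (hr : 0 ≤ r) :
    r ^ 2 * profile (e - 2) (f - 2) D K r = r ^ 2 / 2 - D * r ^ e - K * r ^ f := by
  have hsq (x : ℝ) (hx : x ≠ 0) : r ^ 2 * r ^ (x - 2) = r ^ x := by
    rw [← rpow_natCast, ← rpow_add' hr (by simpa using hx)]
    norm_num
  rw [profile, ← hsq e he, ← hsq f hf]
  ring

lemma profile_lt_profile_of_lt {D' r : ℝ} (hr : 0 < r) (hD : D < D') :
    profile a b D' K r < profile a b D K r := by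
  have := mul_lt_mul_of_pos_right hD (rpow_pos_of_pos hr a)
  rw [profile, profile]
  linarith

lemma profile_profileCrit (ha : a < 0) (hb : 0 < b) (hD : 0 < D) (hK : 0 < K) :
    profile a b D K (profileCrit a b D K) = 1 / 2 - profileDeficit a b D K := by
  set X := -a * D / b
  have hX : 0 < X := by have : 0 < -a := neg_pos.2 ha; positivity
  have hk : 0 < 1 / K := one_div_pos.2 hK
  have hba : b - a ≠ 0 := by linarith
  have hcrit (e : ℝ) :
      profileCrit a b D K ^ e = X ^ (e / (b - a)) * (1 / K) ^ (e / (b - a)) := by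
    rw [profileCrit, show -a * D / (b * K) = X * (1 / K) by ring, ← rpow_mul (by positivity),
      one_div_mul_eq_div, mul_rpow hX.le hk.le]
  have hsucc (x : ℝ) (hx : 0 < x) : x ^ (b / (b - a)) = x ^ (a / (b - a)) * x := by
    rw [← rpow_add_one hx.ne']
    congr 1
    field_simp
    ring
  have hDX : D = b * X / -a := by
    rw [eq_div_iff (by linarith)]
    simp only [X]
    field_simp
  rw [profile, profileDeficit, hcrit, hcrit, hsucc X hX, hsucc _ hk, hDX]
  field_simp [ha.ne]
  ring

lemma profileDeficit_pos (ha : a < 0) (hb : 0 < b) (hD : 0 < D) (hK : 0 < K) :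
    0 < profileDeficit a b D K := by
  have hna : 0 < -a := neg_pos.2 ha
  exact mul_pos (mul_pos (div_pos (by linarith) hna) (rpow_pos_of_pos (by positivity) _))
    (rpow_pos_of_pos (one_div_pos.2 hK) _)

lemma profileDeficit_mul_rpow (ha : a < 0) (hb : 0 < b) (hA : 0 ≤ A) {c : ℝ} (hc : 0 ≤ c)
    (α : ℝ) :
    profileDeficit a b (A * c ^ α) K = profileDeficit a b A K * c ^ (α * b / (b - a)) := by
  have : 0 ≤ -a * A / b := div_nonneg (mul_nonneg (by linarith) hA) hb.le
  rw [profileDeficit, profileDeficit, show -a * (A * c ^ α) / b = -a * A / b * c ^ α by ring,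
    mul_rpow this (rpow_nonneg hc _), ← rpow_mul hc, ← mul_div_assoc α b]
  ring

lemma profile_profileCrit_eq_zero (ha : a < 0) (hb : 0 < b) (hA : 0 < A) (hK : 0 < K)
    {α c₀ : ℝ} (hc₀ : 0 < c₀) (hc₀α : c₀ ^ (α * b / (b - a)) = 1 / (2 * profileDeficit a b A K)) :
    profile a b (A * c₀ ^ α) K (profileCrit a b (A * c₀ ^ α) K) = 0 := by
  have hA₀ : 0 < A * c₀ ^ α := mul_pos hA (rpow_pos_of_pos hc₀ _)
  rw [profile_profileCrit ha hb hA₀ hK, profileDeficit_mul_rpow ha hb hA.le hc₀.le, hc₀α]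
  field_simp [(profileDeficit_pos ha hb hA hK).ne']
  norm_num

end Profile

lemma biharmonic_exponents {N : ℕ} (hN : 5 ≤ N) {p : ℝ} (hp1 : 2 < p) (hp2 : p < 2 + 4 / N) :
    0 < p * (N * (p - 2) / (4 * p)) ∧ p * (N * (p - 2) / (4 * p)) < 2 ∧
      2 < 2 * (N : ℝ) / (N - 4) ∧ N * (p - 2) / (4 * p) < 1 := by
  have hN5 : (5 : ℝ) ≤ N := by exact_mod_cast hN
  have hpγ : p * (N * (p - 2) / (4 * p)) = N * (p - 2) / 4 := by field_simp
  have hpN : (p - 2) * N < 4 := (lt_div_iff₀ (by linarith)).1 (by linarith : p - 2 < 4 / N)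
  have hpγ2 : p * (N * (p - 2) / (4 * p)) < 2 := by rw [hpγ]; linarith
  refine ⟨by rw [hpγ]; nlinarith, hpγ2, (lt_div_iff₀ (by linarith)).2 (by linarith), ?_⟩
  by_contra! hγ
  nlinarith
/-- With `h_c(r) = r² g_c(r)` and `r_* = r_{c_*}`: `g_{c_*}(r_*) = 0`, and for any
`0 < c < c_*` one has `g_c(r_*) > 0` and `h_c` has exactly three zeros `0 < r₁ < r_* < r₂`
on `[0, ∞)`. -/
theorem stmt2
    (N : ℕ) (hN : 5 ≤ N)
    (p μ C S : ℝ)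
    (hp1 : 2 < p) (hp2 : p < 2 + 4 / (N : ℝ))
    (hμ : 0 < μ) (hC : 0 < C) (hS : 0 < S) :
    let q : ℝ := 2 * (N : ℝ) / ((N : ℝ) - 4)
    let γ : ℝ := (N : ℝ) * (p - 2) / (4 * p)
    let g : ℝ → ℝ → ℝ := fun c r =>
      1 / 2 - (μ / p) * C ^ p * c ^ (p * (1 - γ) / 2) * r ^ (p * γ - 2)
        - (1 / (q * S ^ (q / 2))) * r ^ (q - 2)
    let h : ℝ → ℝ → ℝ := fun c r =>
      r ^ 2 / 2 - (μ / p) * C ^ p * c ^ (p * (1 - γ) / 2) * r ^ (p * γ)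
        - r ^ q / (q * S ^ (q / 2))
    let E : ℝ :=
      ((q - p * γ) / (2 - p * γ)) *
        ((2 - p * γ) * μ * C ^ p / ((q - 2) * p)) ^ ((q - 2) / (q - p * γ)) *
        (q * S ^ (q / 2)) ^ ((p * γ - 2) / (q - p * γ))
    let cstar : ℝ := (1 / (2 * E)) ^ (2 * (q - p * γ) / (p * (1 - γ) * (q - 2)))
    let rstar : ℝ :=
      ((2 - p * γ) * μ * q * S ^ (q / 2) * C ^ p * cstar ^ (p * (1 - γ) / 2)
        / ((q - 2) * p)) ^ (1 / (q - p * γ))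
    g cstar rstar = 0 ∧
    ∀ c : ℝ, 0 < c → c < cstar →
      0 < g c rstar ∧
      ∃ r1 r2 : ℝ, 0 < r1 ∧ r1 < rstar ∧ rstar < r2 ∧
        h c 0 = 0 ∧ h c r1 = 0 ∧ h c r2 = 0 ∧
        ∀ r : ℝ, 0 ≤ r → h c r = 0 → r = 0 ∨ r = r1 ∨ r = r2 := by
  intro q γ g h E cstar rstar
  obtain ⟨hpγ, hpγ2, hq, hγ⟩ : 0 < p * γ ∧ p * γ < 2 ∧ 2 < q ∧ γ < 1 :=
    biharmonic_exponents hN hp1 hp2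
  have ha : p * γ - 2 < 0 := by linarith
  have hb : 0 < q - 2 := by linarith
  have hα : 0 < p * (1 - γ) / 2 := by nlinarith
  have hA : 0 < μ / p * C ^ p := by positivity
  have hK : 0 < 1 / (q * S ^ (q / 2)) := by positivity
  have hE : E = profileDeficit (p * γ - 2) (q - 2) (μ / p * C ^ p) (1 / (q * S ^ (q / 2))) := by
    rw [profileDeficit, one_div_one_div, show q - 2 - (p * γ - 2) = q - p * γ by ring,
      show -(p * γ - 2) = 2 - p * γ by ring,
      show (2 - p * γ) * (μ / p * C ^ p) / (q - 2) = (2 - p * γ) * μ * C ^ p / ((q - 2) * p) by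
        field_simp]
  have hE0 : 0 < 1 / (2 * E) := by
    have := hE ▸ profileDeficit_pos ha hb hA hK
    positivity
  have hcstar : cstar ^ (p * (1 - γ) / 2 * (q - 2) / (q - 2 - (p * γ - 2))) = 1 / (2 * E) := by
    have : 1 - γ ≠ 0 := by linarith
    have : q - p * γ ≠ 0 := by linarith
    show ((1 / (2 * E)) ^ _) ^ _ = _
    rw [← rpow_mul hE0.le, show q - 2 - (p * γ - 2) = q - p * γ by ring]
    convert rpow_one (1 / (2 * E)) using 2
    field_simp
  have hrstar : rstar = profileCrit (p * γ - 2) (q - 2)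
      (μ / p * C ^ p * cstar ^ (p * (1 - γ) / 2)) (1 / (q * S ^ (q / 2))) := by
    rw [profileCrit, show q - 2 - (p * γ - 2) = q - p * γ by ring]
    show _ ^ _ = _
    congr 1
    field_simp
    ring
  have hh (c r : ℝ) (hr : 0 ≤ r) : h c r = r ^ 2 * g c r := by
    rw [show g c r = profile (p * γ - 2) (q - 2) (μ / p * C ^ p * c ^ (p * (1 - γ) / 2))
      (1 / (q * S ^ (q / 2))) r from rfl, sq_mul_profile_sub_two hpγ.ne' (by linarith) hr]
    ring
  have hcpos : 0 < cstar := rpow_pos_of_pos hE0 _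
  have hzero : g cstar rstar = 0 := by
    rw [hrstar]
    exact profile_profileCrit_eq_zero ha hb hA hK hcpos (hE ▸ hcstar)
  have hrpos : 0 < rstar :=
    hrstar ▸ profileCrit_pos ha hb (mul_pos hA (rpow_pos_of_pos hcpos _)) hK
  refine ⟨hzero, fun c hc hcc => ?_⟩
  have hpos : 0 < g c rstar := by
    rw [← hzero]
    exact profile_lt_profile_of_lt hrpos (mul_lt_mul_of_pos_left (rpow_lt_rpow hc.le hcc hα) hA)
  obtain ⟨r₁, r₂, hr₁, hr₁s, hr₂s, hz₁, hz₂, huniq⟩ :=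
    exists_two_zeros_sq_mul_profile ha hb (mul_pos hA (rpow_pos_of_pos hc _)) hK hrpos hpos
  refine ⟨hpos, r₁, r₂, hr₁, hr₁s, hr₂s, ?_, ?_, ?_, fun r hr => ?_⟩
  · rw [hh c 0 le_rfl, zero_pow two_ne_zero, zero_mul]
  · rwa [hh c r₁ hr₁.le]
  · rwa [hh c r₂ (by linarith)]
  · rw [hh c r hr]
    exact huniq r hr
end

section
/- If 0 < c ≤ c_*, then r_c ≤ ( (2−pγ_p)·4*·S^{4*/2} / (2·(4*−pγ_p)) )^{1/(4*−2)} < S^{N/8}. In particular, r_* := r_{c_*} satisfies 0 < r_* < S^{N/8}. -/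
open Real Filter Set

set_option maxHeartbeats 2000000 in
/-- If `0 < c ≤ c_*` then
`r_c ≤ ((2-pγ_p)·4*·S^{4*/2} / (2(4*-pγ_p)))^{1/(4*-2)} < S^{N/8}`;
in particular `0 < r_* < S^{N/8}`. -/
theorem stmt3
    (N : ℕ) (hN : 5 ≤ N)
    (p μ C S : ℝ)
    (hp1 : 2 < p) (hp2 : p < 2 + 4 / (N : ℝ))
    (hμ : 0 < μ) (hC : 0 < C) (hS : 0 < S) :
    let q : ℝ := 2 * (N : ℝ) / ((N : ℝ) - 4)
    let γ : ℝ := (N : ℝ) * (p - 2) / (4 * p)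
    let rc : ℝ → ℝ := fun c =>
      ((2 - p * γ) * μ * q * S ^ (q / 2) * C ^ p * c ^ (p * (1 - γ) / 2)
        / ((q - 2) * p)) ^ (1 / (q - p * γ))
    let E : ℝ :=
      ((q - p * γ) / (2 - p * γ)) *
        ((2 - p * γ) * μ * C ^ p / ((q - 2) * p)) ^ ((q - 2) / (q - p * γ)) *
        (q * S ^ (q / 2)) ^ ((p * γ - 2) / (q - p * γ))
    let cstar : ℝ := (1 / (2 * E)) ^ (2 * (q - p * γ) / (p * (1 - γ) * (q - 2)))
    (∀ c : ℝ, 0 < c → c ≤ cstar →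
      rc c ≤ ((2 - p * γ) * q * S ^ (q / 2) / (2 * (q - p * γ))) ^ (1 / (q - 2))) ∧
    ((2 - p * γ) * q * S ^ (q / 2) / (2 * (q - p * γ))) ^ (1 / (q - 2))
      < S ^ ((N : ℝ) / 8) ∧
    0 < rc cstar ∧ rc cstar < S ^ ((N : ℝ) / 8) := by
  intro q γ rc E cstar
  have hq : q = 2 * (N : ℝ) / ((N : ℝ) - 4) := rfl
  have hγdef : γ = (N : ℝ) * (p - 2) / (4 * p) := rfl
  have hEdef : E = ((q - p * γ) / (2 - p * γ)) *
        ((2 - p * γ) * μ * C ^ p / ((q - 2) * p)) ^ ((q - 2) / (q - p * γ)) *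
        (q * S ^ (q / 2)) ^ ((p * γ - 2) / (q - p * γ)) := rfl
  have hcsdef : cstar = (1 / (2 * E)) ^ (2 * (q - p * γ) / (p * (1 - γ) * (q - 2))) := rfl
  have hrc : ∀ c : ℝ, rc c = ((2 - p * γ) * μ * q * S ^ (q / 2) * C ^ p * c ^ (p * (1 - γ) / 2)
        / ((q - 2) * p)) ^ (1 / (q - p * γ)) := fun _ => rfl
  clear_value q γ rc E cstar
  -- basic numeric facts
  have hN5 : (5:ℝ) ≤ (N:ℝ) := by exact_mod_cast hN
  have hN4 : (4:ℝ) < (N:ℝ) := by linarith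
  have hN0 : (0:ℝ) < (N:ℝ) := by linarith
  have hq2 : 2 < q := by
    rw [hq, lt_div_iff₀ (by linarith : (0:ℝ) < (N:ℝ) - 4)]; linarith
  have hp0 : 0 < p := by linarith
  have hpγ : p * γ = (N:ℝ) * (p - 2) / 4 := by
    rw [hγdef]; field_simp
  have hpγ0 : 0 < p * γ := by
    rw [hpγ]; exact div_pos (mul_pos hN0 (by linarith)) (by norm_num)
  have hpγ1 : p * γ < 1 := by
    rw [hpγ, div_lt_one (by norm_num)]
    have h1 : (N:ℝ) * p < (N:ℝ) * (2 + 4 / (N:ℝ)) := by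
      exact mul_lt_mul_of_pos_left hp2 hN0
    have h2 : (N:ℝ) * (2 + 4 / (N:ℝ)) = 2 * (N:ℝ) + 4 := by
      field_simp
    nlinarith
  have hγ1 : γ < 1 := by
    have h : γ = (p * γ) / p := by field_simp
    rw [h, div_lt_one hp0]; linarith
  have hd : 0 < 2 - p * γ := by linarith
  have ha : 0 < q - 2 := by linarith
  have hb : 0 < q - p * γ := by linarith
  have h1γ : 0 < 1 - γ := by linarith
  have hβ : 0 < p * (1 - γ) / 2 := by positivity
  have hq0 : 0 < q := by linarith
  have hKpos : 0 < (2 - p * γ) * μ * C ^ p / ((q - 2) * p) :=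
    div_pos (mul_pos (mul_pos hd hμ) (Real.rpow_pos_of_pos hC p)) (mul_pos ha hp0)
  have hTpos : 0 < q * S ^ (q / 2) := mul_pos hq0 (Real.rpow_pos_of_pos hS _)
  have hEpos : 0 < E := by
    rw [hEdef]
    exact mul_pos (mul_pos (div_pos hb hd) (Real.rpow_pos_of_pos hKpos _))
      (Real.rpow_pos_of_pos hTpos _)
  have hcs : 0 < cstar := by
    rw [hcsdef]; exact Real.rpow_pos_of_pos (by positivity) _
  have hbasepos : ∀ c : ℝ, 0 < c →
      0 < (2 - p * γ) * μ * q * S ^ (q / 2) * C ^ p * c ^ (p * (1 - γ) / 2) / ((q - 2) * p) := by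
    intro c hc
    exact div_pos (mul_pos (mul_pos (mul_pos (mul_pos (mul_pos hd hμ) hq0)
      (Real.rpow_pos_of_pos hS _)) (Real.rpow_pos_of_pos hC _))
      (Real.rpow_pos_of_pos hc _)) (mul_pos ha hp0)
  have hMpos : 0 < (2 - p * γ) * q * S ^ (q / 2) / (2 * (q - p * γ)) :=
    div_pos (mul_pos (mul_pos hd hq0) (Real.rpow_pos_of_pos hS _)) (by positivity)
  have key : rc cstar = ((2 - p * γ) * q * S ^ (q / 2) / (2 * (q - p * γ))) ^ (1 / (q - 2)) := by
    have h1 := hbasepos cstar hcs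
    apply Real.log_injOn_pos (mem_Ioi.mpr (by rw [hrc cstar]; exact Real.rpow_pos_of_pos h1 _))
      (mem_Ioi.mpr (Real.rpow_pos_of_pos hMpos _))
    rw [hrc cstar, Real.log_rpow h1, Real.log_rpow hMpos, hcsdef, hEdef] at *
    set d := 2 - p * γ with hddef
    set A := q - 2 with hAdef
    set B := q - p * γ with hBdef
    have hAne : A ≠ 0 := ne_of_gt ha
    have hBne : B ≠ 0 := ne_of_gt hb
    have hpne : p ≠ 0 := ne_of_gt hp0
    have h1γne : (1 : ℝ) - γ ≠ 0 := ne_of_gt h1γ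
    simp (disch := positivity) only [Real.log_mul, Real.log_div, Real.log_rpow,
      Real.log_inv, Real.log_one]
    field_simp
    ring
  have hN4ne : (N:ℝ) - 4 ≠ 0 := by linarith
  have hMlt : ((2 - p * γ) * q * S ^ (q / 2) / (2 * (q - p * γ))) ^ (1 / (q - 2))
      < S ^ ((N : ℝ) / 8) := by
    have ht0 : 0 < (2 - p * γ) * q / (2 * (q - p * γ)) :=
      div_pos (mul_pos hd hq0) (by positivity)
    have ht1 : (2 - p * γ) * q / (2 * (q - p * γ)) < 1 := by
      rw [div_lt_one (by positivity)]
      nlinarith [mul_pos hpγ0 ha]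
    have hsplit : (2 - p * γ) * q * S ^ (q / 2) / (2 * (q - p * γ))
        = ((2 - p * γ) * q / (2 * (q - p * γ))) * S ^ (q / 2) := by ring
    have hexp : q / 2 * (1 / (q - 2)) = (N : ℝ) / 8 := by
      have e1 : q - 2 = 8 / ((N:ℝ) - 4) := by rw [hq]; field_simp; ring
      rw [e1, hq]; field_simp
    rw [hsplit, Real.mul_rpow ht0.le (Real.rpow_pos_of_pos hS _).le,
      ← Real.rpow_mul hS.le, hexp]
    calc ((2 - p * γ) * q / (2 * (q - p * γ))) ^ (1 / (q - 2)) * S ^ ((N:ℝ) / 8)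
        < 1 * S ^ ((N:ℝ) / 8) := by
          apply mul_lt_mul_of_pos_right
            (Real.rpow_lt_one ht0.le ht1 (one_div_pos.mpr ha))
            (Real.rpow_pos_of_pos hS _)
      _ = S ^ ((N:ℝ) / 8) := one_mul _
  refine ⟨?_, hMlt, ?_, ?_⟩
  · intro c hc hcle
    rw [← key, hrc c, hrc cstar]
    apply Real.rpow_le_rpow (le_of_lt (hbasepos c hc)) ?_ (le_of_lt (one_div_pos.mpr hb))
    apply div_le_div_of_nonneg_right ?_ (mul_pos ha hp0).le
    apply mul_le_mul_of_nonneg_left (Real.rpow_le_rpow hc.le hcle hβ.le)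
    exact (mul_pos (mul_pos (mul_pos (mul_pos hd hμ) hq0)
      (Real.rpow_pos_of_pos hS _)) (Real.rpow_pos_of_pos hC _)).le
  · rw [hrc cstar]; exact Real.rpow_pos_of_pos (hbasepos cstar hcs) _
  · rw [key]; exact hMlt
end

section
/- There exists a unique s_u ∈ ℝ such that f′(s_u) = 0. Moreover, s_u is the strict global maximum point of f, f(s_u) > 0, and f is strictly increasing on (−∞, s_u] and strictly decreasing on [s_u, ∞). -/
/-!
Factoring out `e^{4s}`, `f'(s) = e^{4s} g(s)` with
`g(s) = 2A + B e^{-2s} - 2μγ_p C e^{(2pγ_p - 4)s} - 2D e^{(2·4* - 4)s}`.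
Since `pγ_p > 2` and `4* > 2`, every non-constant term of `g` is strictly decreasing, and `g` runs
from `+∞` (the `B` term) to `-∞` (the `D` term). Hence `f'` has a single zero `s_u`, with `f' > 0`
before it and `f' < 0` after it; as `f(s) → 0` for `s → -∞` and `f` increases up to `s_u`,
`f(s_u) > 0`.
-/

open Real Filter Set Topology

section SignChange

variable {f g w : ℝ → ℝ}

theorem exists_deriv_eq_zero_strictMonoOn_strictAntiOn_of_hasDerivAt_mul
    (hf : ∀ s, HasDerivAt f (w s * g s) s) (hw : ∀ s, 0 < w s) (hg : Continuous g)
    (hg_anti : StrictAnti g) (hg_bot : Tendsto g atBot atTop) (hg_top : Tendsto g atTop atBot) :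
    ∃ s₀, deriv f s₀ = 0 ∧ (∀ s, deriv f s = 0 → s = s₀) ∧
      StrictMonoOn f (Iic s₀) ∧ StrictAntiOn f (Ici s₀) := by
  obtain ⟨s₀, hs₀⟩ := hg.surjective' hg_bot hg_top 0
  have hderiv : ∀ s, deriv f s = w s * g s := fun s => (hf s).deriv
  have hcont : Continuous f := continuous_iff_continuousAt.2 fun s => (hf s).continuousAt
  refine ⟨s₀, by rw [hderiv, hs₀, mul_zero], fun s hs => ?_, ?_, ?_⟩
  · rw [hderiv, mul_eq_zero, or_iff_right (hw s).ne'] at hs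
    exact hg_anti.injective (hs.trans hs₀.symm)
  · refine strictMonoOn_of_deriv_pos (convex_Iic s₀) hcont.continuousOn fun s hs => ?_
    rw [interior_Iic] at hs
    exact hderiv s ▸ mul_pos (hw s) (hs₀ ▸ hg_anti hs)
  · refine strictAntiOn_of_deriv_neg (convex_Ici s₀) hcont.continuousOn fun s hs => ?_
    rw [interior_Ici] at hs
    exact hderiv s ▸ mul_neg_of_pos_of_neg (hw s) (hs₀ ▸ hg_anti hs)

theorem lt_of_strictMonoOn_Iic_of_strictAntiOn_Ici {s₀ s : ℝ} (hmono : StrictMonoOn f (Iic s₀))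
    (hanti : StrictAntiOn f (Ici s₀)) (hs : s ≠ s₀) : f s < f s₀ := by
  rcases hs.lt_or_gt with hlt | hgt
  · exact hmono hlt.le self_mem_Iic hlt
  · exact hanti self_mem_Ici hgt.le hgt

theorem pos_of_strictMonoOn_Iic_of_tendsto_atBot {s₀ : ℝ} (hmono : StrictMonoOn f (Iic s₀))
    (hf : Tendsto f atBot (𝓝 0)) : 0 < f s₀ := by
  have h0 : 0 ≤ f (s₀ - 1) := by
    refine le_of_tendsto hf ?_
    filter_upwards [eventually_le_atBot (s₀ - 1)] with s hs
    exact hmono.monotoneOn (hs.trans (by linarith)) (by simp) hs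
  exact h0.trans_lt (hmono (by simp) self_mem_Iic (by linarith))

end SignChange

theorem Real.hasDerivAt_exp_const_mul (k s : ℝ) :
    HasDerivAt (fun x => exp (k * x)) (exp (k * s) * k) s := by
  simpa using ((hasDerivAt_id s).const_mul k).exp

section ExpFiber

variable (a b c d α β γ δ : ℝ)

noncomputable def expFiber (s : ℝ) : ℝ :=
  a * exp (α * s) + b * exp (β * s) - c * exp (γ * s) - d * exp (δ * s)

noncomputable def expFiberSlope (s : ℝ) : ℝ :=
  a * α + b * β * exp ((β - α) * s) - c * γ * exp ((γ - α) * s) - d * δ * exp ((δ - α) * s)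

theorem hasDerivAt_expFiber (s : ℝ) :
    HasDerivAt (expFiber a b c d α β γ δ) (exp (α * s) * expFiberSlope a b c d α β γ δ s) s := by
  have h := ((((hasDerivAt_exp_const_mul α s).const_mul a).add
    ((hasDerivAt_exp_const_mul β s).const_mul b)).sub
    ((hasDerivAt_exp_const_mul γ s).const_mul c)).sub ((hasDerivAt_exp_const_mul δ s).const_mul d)
  have hexp (k : ℝ) : exp (α * s) * exp ((k - α) * s) = exp (k * s) := by
    rw [← exp_add]; ring_nf
  refine h.congr_deriv ?_
  simp only [expFiberSlope]
  linear_combination (-(b * β)) * hexp β + c * γ * hexp γ + d * δ * hexp δ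

theorem continuous_expFiberSlope : Continuous (expFiberSlope a b c d α β γ δ) := by
  unfold expFiberSlope; fun_prop

variable {a b c d α β γ δ}

theorem strictAnti_expFiberSlope (hb : 0 ≤ b * β) (hc : 0 ≤ c * γ) (hd : 0 < d * δ)
    (hβα : β ≤ α) (hαγ : α ≤ γ) (hαδ : α < δ) : StrictAnti (expFiberSlope a b c d α β γ δ) := by
  intro x y hxy
  have hb' : b * β * exp ((β - α) * y) ≤ b * β * exp ((β - α) * x) :=
    mul_le_mul_of_nonneg_left (exp_le_exp.2 (by nlinarith)) hb
  have hc' : c * γ * exp ((γ - α) * x) ≤ c * γ * exp ((γ - α) * y) :=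
    mul_le_mul_of_nonneg_left (exp_le_exp.2 (by nlinarith)) hc
  have hd' : d * δ * exp ((δ - α) * x) < d * δ * exp ((δ - α) * y) :=
    mul_lt_mul_of_pos_left (exp_lt_exp.2 (by nlinarith)) hd
  simp only [expFiberSlope]
  linarith

theorem tendsto_expFiberSlope_atBot (hb : 0 < b * β) (hβα : β < α) (hαγ : α < γ) (hαδ : α < δ) :
    Tendsto (expFiberSlope a b c d α β γ δ) atBot atTop := by
  have hβ : Tendsto (fun s => exp ((β - α) * s)) atBot atTop :=
    tendsto_exp_comp_atTop.2 (tendsto_id.const_mul_atBot_of_neg (by linarith))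
  have hγ : Tendsto (fun s => exp ((γ - α) * s)) atBot (𝓝 0) :=
    tendsto_exp_comp_nhds_zero.2 (tendsto_id.const_mul_atBot (by linarith))
  have hδ : Tendsto (fun s => exp ((δ - α) * s)) atBot (𝓝 0) :=
    tendsto_exp_comp_nhds_zero.2 (tendsto_id.const_mul_atBot (by linarith))
  refine Tendsto.congr (fun s => ?_)
    ((((tendsto_const_nhds (x := a * α)).add_atTop (hβ.const_mul_atTop hb)).atTop_add
      ((hγ.const_mul (c * γ)).neg)).atTop_add ((hδ.const_mul (d * δ)).neg))
  simp only [expFiberSlope]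
  ring

theorem tendsto_expFiberSlope_atTop (hc : 0 < c * γ) (hd : 0 < d * δ) (hβα : β < α)
    (hαγ : α < γ) (hαδ : α < δ) :
    Tendsto (expFiberSlope a b c d α β γ δ) atTop atBot := by
  have hβ : Tendsto (fun s => exp ((β - α) * s)) atTop (𝓝 0) :=
    tendsto_exp_comp_nhds_zero.2 (tendsto_id.const_mul_atTop_of_neg (by linarith))
  have hγ : Tendsto (fun s => exp ((γ - α) * s)) atTop atTop :=
    tendsto_exp_comp_atTop.2 (tendsto_id.const_mul_atTop (by linarith))
  have hδ : Tendsto (fun s => exp ((δ - α) * s)) atTop atTop :=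
    tendsto_exp_comp_atTop.2 (tendsto_id.const_mul_atTop (by linarith))
  refine Tendsto.congr (fun s => ?_)
    (((tendsto_const_nhds (x := a * α)).add (hβ.const_mul (b * β))).add_atBot
    ((tendsto_neg_atBot_iff.2 (hγ.const_mul_atTop hc)).atBot_add_atBot
      (tendsto_neg_atBot_iff.2 (hδ.const_mul_atTop hd))))
  simp only [expFiberSlope]
  ring

theorem tendsto_expFiber_atBot (hα : 0 < α) (hβ : 0 < β) (hγ : 0 < γ) (hδ : 0 < δ) :
    Tendsto (expFiber a b c d α β γ δ) atBot (𝓝 0) := by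
  have key : ∀ k : ℝ, 0 < k → Tendsto (fun s => exp (k * s)) atBot (𝓝 0) := fun k hk =>
    tendsto_exp_comp_nhds_zero.2 (tendsto_id.const_mul_atBot hk)
  unfold expFiber
  simpa using ((((key α hα).const_mul a).add ((key β hβ).const_mul b)).sub
    ((key γ hγ).const_mul c)).sub ((key δ hδ).const_mul d)

theorem expFiber_exists_unique_deriv_eq_zero (hb : 0 < b) (hc : 0 < c) (hd : 0 < d) (hβ : 0 < β)
    (hβα : β < α) (hαγ : α < γ) (hαδ : α < δ) :
    ∃ s₀, deriv (expFiber a b c d α β γ δ) s₀ = 0 ∧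
      (∀ s, deriv (expFiber a b c d α β γ δ) s = 0 → s = s₀) ∧
      0 < expFiber a b c d α β γ δ s₀ ∧
      (∀ s, s ≠ s₀ → expFiber a b c d α β γ δ s < expFiber a b c d α β γ δ s₀) ∧
      StrictMonoOn (expFiber a b c d α β γ δ) (Iic s₀) ∧
      StrictAntiOn (expFiber a b c d α β γ δ) (Ici s₀) := by
  have hγ : 0 < γ := by linarith
  have hδ : 0 < δ := by linarith
  obtain ⟨s₀, hcrit, huniq, hmono, hanti⟩ :=
    exists_deriv_eq_zero_strictMonoOn_strictAntiOn_of_hasDerivAt_mul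
      (hasDerivAt_expFiber a b c d α β γ δ) (fun s => exp_pos (α * s))
      (continuous_expFiberSlope a b c d α β γ δ)
      (strictAnti_expFiberSlope (by positivity) (by positivity) (by positivity) hβα.le hαγ.le hαδ)
      (tendsto_expFiberSlope_atBot (by positivity) hβα hαγ hαδ)
      (tendsto_expFiberSlope_atTop (by positivity) (by positivity) hβα hαγ hαδ)
  exact ⟨s₀, hcrit, huniq,
    pos_of_strictMonoOn_Iic_of_tendsto_atBot hmono (tendsto_expFiber_atBot (by linarith) hβ hγ hδ),
    fun s hs => lt_of_strictMonoOn_Iic_of_strictAntiOn_Ici hmono hanti hs, hmono, hanti⟩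

end ExpFiber

theorem two_lt_mul_gamma {N p : ℝ} (hN : 0 < N) (hp : 2 + 8 / N < p) :
    2 < p * (N * (p - 2) / (4 * p)) := by
  have hp0 : 0 < p := by linarith [div_pos (by norm_num : (0:ℝ) < 8) hN]
  have h8 : 8 < N * (p - 2) := (div_lt_iff₀' hN).1 (by linarith)
  rw [mul_div_assoc', lt_div_iff₀ (by positivity)]
  nlinarith

theorem two_lt_two_mul_div_sub_four {N : ℝ} (hN : 4 < N) : 2 < 2 * N / (N - 4) := by
  rw [lt_div_iff₀ (by linarith)]; linarith

theorem stmt7_general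
    (N : ℕ) (hN : 5 ≤ N)
    (p μ A B C D : ℝ)
    (hp1 : 2 + 8 / (N : ℝ) < p)
    (hμ : 0 < μ) (hB : 0 < B) (hC : 0 < C) (hD : 0 < D) :
    let q : ℝ := 2 * (N : ℝ) / ((N : ℝ) - 4)
    let γ : ℝ := (N : ℝ) * (p - 2) / (4 * p)
    let f : ℝ → ℝ := fun s =>
      exp (4 * s) / 2 * A + exp (2 * s) / 2 * B
        - μ * exp (2 * p * γ * s) / p * C - exp (2 * q * s) / q * D
    ∃ su : ℝ,
      deriv f su = 0 ∧
      (∀ s : ℝ, deriv f s = 0 → s = su) ∧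
      0 < f su ∧
      (∀ s : ℝ, s ≠ su → f s < f su) ∧
      StrictMonoOn f (Iic su) ∧
      StrictAntiOn f (Ici su) := by
  intro q γ f
  have hN4 : (4 : ℝ) < N := by exact_mod_cast hN
  have hpγ : 2 < p * γ := two_lt_mul_gamma (by linarith) hp1
  have hq : 2 < q := two_lt_two_mul_div_sub_four hN4
  have hp : 0 < p := by linarith [div_pos (by norm_num : (0 : ℝ) < 8) (by linarith : (0 : ℝ) < N)]
  have hf : f = expFiber (A / 2) (B / 2) (μ * C / p) (D / q) 4 2 (2 * p * γ) (2 * q) := by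
    funext s
    simp only [f, expFiber]
    ring
  rw [hf]
  exact expFiber_exists_unique_deriv_eq_zero (by positivity) (by positivity)
    (div_pos hD (by linarith)) two_pos (by norm_num) (by linarith) (by linarith)

/-- Lemma 5.2(i) (scalar form): the fiber map `f` has a unique critical point `s_u`,
which is its strict global maximum, attained at a positive level; `f` is strictly
increasing on `(-∞, s_u]` and strictly decreasing on `[s_u, ∞)`. -/
theorem stmt7
    (N : ℕ) (hN : 5 ≤ N)
    (p μ A B C D : ℝ)
    (hp1 : 2 + 8 / (N : ℝ) < p) (hp2 : p < 2 * (N : ℝ) / ((N : ℝ) - 4))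
    (hμ : 0 < μ) (hA : 0 < A) (hB : 0 < B) (hC : 0 < C) (hD : 0 < D) :
    let q : ℝ := 2 * (N : ℝ) / ((N : ℝ) - 4)
    let γ : ℝ := (N : ℝ) * (p - 2) / (4 * p)
    let f : ℝ → ℝ := fun s =>
      exp (4 * s) / 2 * A + exp (2 * s) / 2 * B
        - μ * exp (2 * p * γ * s) / p * C - exp (2 * q * s) / q * D
    ∃ su : ℝ,
      deriv f su = 0 ∧
      (∀ s : ℝ, deriv f s = 0 → s = su) ∧
      0 < f su ∧
      (∀ s : ℝ, s ≠ su → f s < f su) ∧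
      StrictMonoOn f (Iic su) ∧
      StrictAntiOn f (Ici su) :=
  stmt7_general N hN p μ A B C D hp1 hμ hB hC hD
end

section
/- If f(0) ≤ 0, then f′(0) < 0; equivalently, if (1/2)A + (1/2)B − (μ/p)C − (1/4*)D ≤ 0, then A + (1/2)B − μγ_p C − D < 0. -/
open Real Filter Set

/-- Lemma 5.2(ii) (scalar form): if `I(u) = f(0) ≤ 0` then `2P(u) = f'(0) < 0`, i.e.
if `(1/2)A + (1/2)B - (μ/p)C - (1/4*)D ≤ 0` then `A + (1/2)B - μγ_p C - D < 0`. -/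
theorem stmt8
    (N : ℕ) (hN : 5 ≤ N)
    (p μ A B C D : ℝ)
    (hp1 : 2 + 8 / (N : ℝ) < p) (hp2 : p < 2 * (N : ℝ) / ((N : ℝ) - 4))
    (hμ : 0 < μ) (hA : 0 < A) (hB : 0 < B) (hC : 0 < C) (hD : 0 < D) :
    let q : ℝ := 2 * (N : ℝ) / ((N : ℝ) - 4)
    let γ : ℝ := (N : ℝ) * (p - 2) / (4 * p)
    (1 / 2 * A + 1 / 2 * B - μ / p * C - 1 / q * D ≤ 0) →
      A + 1 / 2 * B - μ * γ * C - D < 0 := by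
  intro q γ h
  have hNR : (5:ℝ) ≤ (N:ℝ) := by exact_mod_cast hN
  have hN0 : (0:ℝ) < (N:ℝ) := by linarith
  have hN4 : (0:ℝ) < (N:ℝ) - 4 := by linarith
  have hp0 : 0 < p := by
    have : (0:ℝ) ≤ 8 / (N:ℝ) := by positivity
    linarith
  have hkey : 8 < (p - 2) * (N:ℝ) := by
    have := (div_lt_iff₀ hN0).mp (by linarith : 8 / (N:ℝ) < p - 2)
    linarith
  have hq : 1 / q = ((N:ℝ) - 4) / (2 * (N:ℝ)) := by
    show 1 / (2 * (N:ℝ) / ((N:ℝ) - 4)) = _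
    rw [one_div_div]
  have hγ : μ * γ * C - 2 * (μ / p) * C > 0 := by
    have : γ - 2 / p = ((p - 2) * (N:ℝ) - 8) / (4 * p) := by
      show (N:ℝ) * (p - 2) / (4 * p) - 2 / p = _
      field_simp; ring
    have h1 : 0 < γ - 2 / p := by rw [this]; apply div_pos <;> linarith
    have : μ * γ * C - 2 * (μ / p) * C = μ * C * (γ - 2 / p) := by ring
    rw [this]; positivity
  have hqD : 2 * (1 / q) * D < D := by
    rw [hq]
    have : ((N:ℝ) - 4) / (2 * (N:ℝ)) < 1 / 2 := by
      rw [div_lt_div_iff₀ (by linarith) (by norm_num)]; linarith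
    nlinarith
  linarith
end

section
/- There exist constants C₀ > 0 and ε₀ > 0 such that for all 0 < ε < ε₀: | ∫_{ℝ^N} u_ε(x)^{4*} dx − 𝑆̂ | ≤ C₀·ε^{N}, where 𝑆̂ := ∫_{ℝ^N} U₁(x)^{4*} dx (i.e., ∫ u_ε^{4*} dx = S^{N/4} + O(ε^{N})). -/
open Real Filter Set MeasureTheory

set_option maxHeartbeats 1000000 in
/-- Estimate (5.26): `∫ u_ε^{4*} = S^{N/4} + O(ε^{N})` as `ε → 0⁺`, where
`u_ε = ψ U_ε` is the truncated Aubin–Talenti function. -/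
theorem stmt16
    (N : ℕ) (hN : 5 ≤ N)
    (ψ : EuclideanSpace ℝ (Fin N) → ℝ)
    (hψ_smooth : ContDiff ℝ (⊤ : ℕ∞) ψ)
    (hψ_supp : HasCompactSupport ψ)
    (hψ01 : ∀ x, ψ x ∈ Icc (0 : ℝ) 1)
    (hψ1 : ∀ x, ‖x‖ ≤ 1 → ψ x = 1)
    (hψ2 : ∀ x, 2 ≤ ‖x‖ → ψ x = 0)
    (hψrad : ∀ x y, ‖x‖ = ‖y‖ → ψ x = ψ y) :
    let q : ℝ := 2 * (N : ℝ) / ((N : ℝ) - 4)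
    let U : ℝ → EuclideanSpace ℝ (Fin N) → ℝ := fun ε x =>
      ((N : ℝ) * ((N : ℝ) + 2) * ((N : ℝ) - 2) * ((N : ℝ) - 4)) ^ (((N : ℝ) - 4) / 8)
        * ε ^ (((N : ℝ) - 4) / 2) * (ε ^ 2 + ‖x‖ ^ 2) ^ (-(((N : ℝ) - 4) / 2))
    let u : ℝ → EuclideanSpace ℝ (Fin N) → ℝ := fun ε x => ψ x * U ε x
    let Shat : ℝ := ∫ x, (U 1 x) ^ q
    ∃ C₀ : ℝ, 0 < C₀ ∧ ∃ ε₀ : ℝ, 0 < ε₀ ∧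
      ∀ ε : ℝ, 0 < ε → ε < ε₀ →
        |(∫ x, (u ε x) ^ q) - Shat| ≤ C₀ * ε ^ (N : ℝ) := by
  intro q U u Shat
  have hN4 : (4 : ℝ) < (N : ℝ) := by exact_mod_cast Nat.lt_of_lt_of_le (by norm_num) hN
  set a : ℝ := ((N : ℝ) - 4) / 2 with ha_def
  have ha : 0 < a := by simp only [ha_def]; linarith
  set D : ℝ := ((N : ℝ) * ((N : ℝ) + 2) * ((N : ℝ) - 2) * ((N : ℝ) - 4)) ^ (((N : ℝ) - 4) / 8)
    with hD_def
  have hD : 0 < D := by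
    apply Real.rpow_pos_of_pos
    have h1 : (0:ℝ) < (N : ℝ) := by linarith
    have h2 : (0:ℝ) < (N : ℝ) + 2 := by linarith
    have h3 : (0:ℝ) < (N : ℝ) - 2 := by linarith
    have h4 : (0:ℝ) < (N : ℝ) - 4 := by linarith
    exact mul_pos (mul_pos (mul_pos h1 h2) h3) h4
  have hq : 0 < q := by
    apply div_pos <;> linarith
  have haq : a * q = (N : ℝ) := by
    show ((N : ℝ) - 4) / 2 * (2 * (N : ℝ) / ((N : ℝ) - 4)) = (N : ℝ)
    have hne : (N : ℝ) - 4 ≠ 0 := by linarith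
    field_simp
  have hUdef : ∀ ε : ℝ, ∀ x : EuclideanSpace ℝ (Fin N), U ε x = D * ε ^ a * (ε ^ 2 + ‖x‖ ^ 2) ^ (-a) := fun ε x => rfl
  -- the basic profile
  set f : EuclideanSpace ℝ (Fin N) → ℝ := fun x => ((1 : ℝ) + ‖x‖ ^ 2) ^ (-(N : ℝ)) with hf_def
  have hf_nonneg : ∀ x, 0 ≤ f x := fun x => Real.rpow_nonneg (by positivity) _
  have hf_cont : Continuous f := by
    apply Continuous.rpow_const
    · exact continuous_const.add (continuous_norm.pow 2)
    · intro x; left; positivity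
  have hf_int : Integrable f := by
    have hnr : ((Module.finrank ℝ (EuclideanSpace ℝ (Fin N)) : ℝ)) < 2 * (N : ℝ) := by
      rw [show Module.finrank ℝ (EuclideanSpace ℝ (Fin N)) = N from finrank_euclideanSpace_fin]
      linarith
    have h := integrable_rpow_neg_one_add_norm_sq (E := EuclideanSpace ℝ (Fin N)) (μ := volume) hnr
    have : -(2 * (N : ℝ)) / 2 = -(N : ℝ) := by ring
    rw [this] at h; exact h
  -- pointwise formula for U ε ^ q
  have hUq : ∀ ε : ℝ, 0 < ε → ∀ x : EuclideanSpace ℝ (Fin N),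
      U ε x ^ q = D ^ q * ε ^ (N : ℝ) * (ε ^ 2 + ‖x‖ ^ 2) ^ (-(N : ℝ)) := by
    intro ε hε x
    have hb : (0 : ℝ) < ε ^ 2 + ‖x‖ ^ 2 := by positivity
    rw [hUdef]
    rw [Real.mul_rpow (by positivity) (Real.rpow_nonneg hb.le _),
        Real.mul_rpow hD.le (Real.rpow_nonneg hε.le _),
        ← Real.rpow_mul hε.le, ← Real.rpow_mul hb.le, haq, neg_mul, haq]
  -- the key pointwise scaling identity
  have hpt : ∀ ε : ℝ, 0 < ε → ∀ x : EuclideanSpace ℝ (Fin N),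
      U ε x ^ q = (D ^ q * ε ^ (N : ℝ) * (ε ^ 2 : ℝ) ^ (-(N : ℝ))) * f (ε⁻¹ • x) := by
    intro ε hε x
    have hnx : ‖ε⁻¹ • x‖ = ε⁻¹ * ‖x‖ := by
      rw [norm_smul, Real.norm_eq_abs, abs_of_pos (inv_pos.2 hε)]
    have hb : (0 : ℝ) < ε ^ 2 + ‖x‖ ^ 2 := by positivity
    have hsplit : ((1 : ℝ) + ‖ε⁻¹ • x‖ ^ 2) = (ε ^ 2)⁻¹ * (ε ^ 2 + ‖x‖ ^ 2) := by
      rw [hnx]; field_simp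
    have : f (ε⁻¹ • x) = ((ε ^ 2 : ℝ))⁻¹ ^ (-(N : ℝ)) * (ε ^ 2 + ‖x‖ ^ 2) ^ (-(N : ℝ)) := by
      show ((1 : ℝ) + ‖ε⁻¹ • x‖ ^ 2) ^ (-(N : ℝ)) = _
      rw [hsplit, Real.mul_rpow (inv_nonneg.2 (by positivity)) hb.le]
    have hc : (0:ℝ) < ((ε ^ 2 : ℝ)) ^ (-(N : ℝ)) := Real.rpow_pos_of_pos (by positivity) _
    rw [hUq ε hε x, this, Real.inv_rpow (by positivity)]
    field_simp
  -- integrability of U ε ^ q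
  have hUint : ∀ ε : ℝ, 0 < ε → Integrable (fun x => U ε x ^ q) := by
    intro ε hε
    have h1 : Integrable (fun x : EuclideanSpace ℝ (Fin N) => f (ε⁻¹ • x)) :=
      hf_int.comp_smul (inv_ne_zero hε.ne')
    exact (h1.const_mul _).congr (Eventually.of_forall fun x => (hpt ε hε x).symm)
  -- scaling yields a constant integral
  have hconst : ∀ ε : ℝ, 0 < ε → ε ^ (N : ℝ) * (ε ^ 2 : ℝ) ^ (-(N : ℝ)) * ε ^ (N : ℕ) = 1 := by
    intro ε hε
    rw [← Real.rpow_natCast ε N, ← Real.rpow_natCast ε 2, ← Real.rpow_mul hε.le,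
        ← Real.rpow_add hε, ← Real.rpow_add hε]
    rw [show (N : ℝ) + (2 : ℕ) * -(N : ℝ) + (N : ℝ) = 0 by push_cast; ring, Real.rpow_zero]
  have hscale : ∀ ε : ℝ, 0 < ε → (∫ x, U ε x ^ q) = D ^ q * ∫ x, f x := by
    intro ε hε
    calc (∫ x, U ε x ^ q)
        = ∫ x, (D ^ q * ε ^ (N : ℝ) * (ε ^ 2 : ℝ) ^ (-(N : ℝ))) * f (ε⁻¹ • x) :=
          integral_congr_ae (Eventually.of_forall (hpt ε hε))
      _ = (D ^ q * ε ^ (N : ℝ) * (ε ^ 2 : ℝ) ^ (-(N : ℝ))) * ∫ x, f (ε⁻¹ • x) :=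
          integral_const_mul _ _
      _ = (D ^ q * ε ^ (N : ℝ) * (ε ^ 2 : ℝ) ^ (-(N : ℝ))) * (ε ^ Module.finrank ℝ (EuclideanSpace ℝ (Fin N)) * ∫ x, f x) := by
          rw [Measure.integral_comp_inv_smul_of_nonneg volume f hε.le, smul_eq_mul]
      _ = D ^ q * ε ^ (N : ℝ) * (ε ^ 2 : ℝ) ^ (-(N : ℝ)) * (ε ^ (N : ℕ) * ∫ x, f x) := by
          rw [show Module.finrank ℝ (EuclideanSpace ℝ (Fin N)) = N from finrank_euclideanSpace_fin]
      _ = (ε ^ (N : ℝ) * (ε ^ 2 : ℝ) ^ (-(N : ℝ)) * ε ^ (N : ℕ)) * (D ^ q * ∫ x, f x) := by ring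
      _ = D ^ q * ∫ x, f x := by rw [hconst ε hε, one_mul]
  have hShat : Shat = D ^ q * ∫ x, f x := hscale 1 one_pos
  -- pointwise domination of the difference
  have hIf : 0 ≤ ∫ x, f x := integral_nonneg hf_nonneg
  set M : ℝ := D ^ q * (2 : ℝ) ^ (N : ℝ) with hM_def
  have hM : 0 < M := by positivity
  have hdom : ∀ ε : ℝ, 0 < ε → ∀ x : EuclideanSpace ℝ (Fin N),
      |u ε x ^ q - U ε x ^ q| ≤ M * ε ^ (N : ℝ) * f x := by
    intro ε hε x
    have hU_nonneg : 0 ≤ U ε x := by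
      rw [hUdef]
      have : (0:ℝ) < ε ^ 2 + ‖x‖ ^ 2 := by positivity
      positivity
    by_cases hx : ‖x‖ ≤ 1
    · have : u ε x = U ε x := by show ψ x * U ε x = U ε x; rw [hψ1 x hx, one_mul]
      rw [this, sub_self, abs_zero]
      have : 0 ≤ f x := hf_nonneg x
      positivity
    · push_neg at hx
      have hb : (0 : ℝ) < ε ^ 2 + ‖x‖ ^ 2 := by positivity
      have huq : u ε x ^ q = ψ x ^ q * U ε x ^ q := Real.mul_rpow (hψ01 x).1 hU_nonneg
      have hψq0 : 0 ≤ ψ x ^ q := Real.rpow_nonneg (hψ01 x).1 _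
      have hψq1 : ψ x ^ q ≤ 1 := Real.rpow_le_one (hψ01 x).1 (hψ01 x).2 hq.le
      have hUq_nonneg : 0 ≤ U ε x ^ q := Real.rpow_nonneg hU_nonneg _
      have habs : |u ε x ^ q - U ε x ^ q| ≤ U ε x ^ q := by
        rw [huq, abs_sub_comm,
            show U ε x ^ q - ψ x ^ q * U ε x ^ q = (1 - ψ x ^ q) * U ε x ^ q by ring,
            abs_mul, abs_of_nonneg hUq_nonneg,
            abs_of_nonneg (by linarith : (0:ℝ) ≤ 1 - ψ x ^ q)]
        nlinarith
      refine habs.trans ?_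
      rw [hUq ε hε x]
      have hx2 : (1 : ℝ) ≤ ‖x‖ ^ 2 := one_le_pow₀ hx.le
      have hcomp : (ε ^ 2 + ‖x‖ ^ 2) ^ (-(N : ℝ)) ≤ (2:ℝ) ^ (N : ℝ) * f x := by
        have h1 : (0:ℝ) < (1 + ‖x‖ ^ 2) / 2 := by positivity
        have h2 : (1 + ‖x‖ ^ 2) / 2 ≤ ε ^ 2 + ‖x‖ ^ 2 := by nlinarith [sq_nonneg ε]
        calc (ε ^ 2 + ‖x‖ ^ 2) ^ (-(N : ℝ))
            ≤ ((1 + ‖x‖ ^ 2) / 2) ^ (-(N : ℝ)) :=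
              Real.rpow_le_rpow_of_nonpos h1 h2 (neg_nonpos.2 (by positivity))
          _ = (2:ℝ) ^ (N : ℝ) * f x := by
              rw [Real.div_rpow (by positivity) (by norm_num),
                  Real.rpow_neg (by norm_num : (0:ℝ) ≤ 2), div_inv_eq_mul, mul_comm]
      calc D ^ q * ε ^ (N : ℝ) * (ε ^ 2 + ‖x‖ ^ 2) ^ (-(N : ℝ))
          ≤ D ^ q * ε ^ (N : ℝ) * ((2:ℝ) ^ (N : ℝ) * f x) := by
            have : (0:ℝ) ≤ D ^ q * ε ^ (N : ℝ) := by positivity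
            exact mul_le_mul_of_nonneg_left hcomp this
        _ = M * ε ^ (N : ℝ) * f x := by rw [hM_def]; ring
  -- measurability of the integrands
  have hcontU : ∀ ε : ℝ, 0 < ε → Continuous (fun x : EuclideanSpace ℝ (Fin N) => U ε x) := by
    intro ε hε
    have : Continuous fun x : EuclideanSpace ℝ (Fin N) => (ε ^ 2 + ‖x‖ ^ 2) ^ (-a) := by
      apply Continuous.rpow_const (continuous_const.add (continuous_norm.pow 2))
      intro x; left; have : (0:ℝ) < ε ^ 2 + ‖x‖ ^ 2 := by positivity
      exact this.ne'
    exact (continuous_const.mul this : Continuous fun x : EuclideanSpace ℝ (Fin N) => (D * ε ^ a) * (ε ^ 2 + ‖x‖ ^ 2) ^ (-a))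
  have hmeas : ∀ ε : ℝ, 0 < ε →
      AEStronglyMeasurable (fun x => u ε x ^ q - U ε x ^ q) volume := by
    intro ε hε
    have h1 : Continuous fun x : EuclideanSpace ℝ (Fin N) => u ε x ^ q := by
      show Continuous fun x : EuclideanSpace ℝ (Fin N) => (ψ x * U ε x) ^ q
      apply Continuous.rpow_const (hψ_smooth.continuous.mul (hcontU ε hε))
      intro x; right; exact hq.le
    have h2 : Continuous fun x : EuclideanSpace ℝ (Fin N) => U ε x ^ q := by
      apply Continuous.rpow_const (hcontU ε hε)
      intro x; right; exact hq.le
    exact (h1.sub h2).aestronglyMeasurable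
  -- integrability of the difference
  have hdiff_int : ∀ ε : ℝ, 0 < ε →
      Integrable (fun x => u ε x ^ q - U ε x ^ q) := by
    intro ε hε
    refine Integrable.mono' ((hf_int.const_mul (M * ε ^ (N : ℝ)))) (hmeas ε hε)
      (Eventually.of_forall fun x => ?_)
    rw [Real.norm_eq_abs]
    exact hdom ε hε x
  -- conclusion
  refine ⟨M * (∫ x, f x) + 1, by positivity, 1, one_pos, fun ε hε hε1 => ?_⟩
  have hsplit : (∫ x, u ε x ^ q)
      = (∫ x, U ε x ^ q) + ∫ x, (u ε x ^ q - U ε x ^ q) := by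
    rw [← integral_add (hUint ε hε) (hdiff_int ε hε)]
    congr 1; funext x; ring
  have hbound : |∫ x, (u ε x ^ q - U ε x ^ q)| ≤ M * ε ^ (N : ℝ) * ∫ x, f x := by
    calc |∫ x, (u ε x ^ q - U ε x ^ q)|
        ≤ ∫ x, |u ε x ^ q - U ε x ^ q| :=
          norm_integral_le_integral_norm (fun x => u ε x ^ q - U ε x ^ q)
      _ ≤ ∫ x, M * ε ^ (N : ℝ) * f x := by
          apply integral_mono (hdiff_int ε hε).abs
          · exact hf_int.const_mul (M * ε ^ (N : ℝ))
          · exact hdom ε hε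
      _ = M * ε ^ (N : ℝ) * ∫ x, f x := integral_const_mul (M * ε ^ (N : ℝ)) f
  have hεN : 0 ≤ ε ^ (N : ℝ) := Real.rpow_nonneg hε.le _
  calc |(∫ x, u ε x ^ q) - Shat|
      = |∫ x, (u ε x ^ q - U ε x ^ q)| := by
        rw [hsplit, hShat, hscale ε hε, add_sub_cancel_left]
    _ ≤ M * ε ^ (N : ℝ) * ∫ x, f x := hbound
    _ ≤ (M * (∫ x, f x) + 1) * ε ^ (N : ℝ) := by nlinarith
end
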